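/- arXiv:1912.02528 — 7 statements merged into one kernel-verified Lean document; each statement's English description precedes it below -/
import Mathlib

section
/- A set X of infinite subsets of ℕ is unbounded (with respect to eventual domination, viewing each infinite set as its increasing enumeration) if and only if for each increasing function a : ℕ → ℕ, there is a set x in X that omits infinitely many intervals [a(n), a(n+1)), i.e., x ∩ [a(n), a(n+1)) = ∅ for infinitely many n. -/
open Set

/-- Increasing enumeration of a subset of ℕ. -/
noncomputable def enum (x : Set ℕ) : ℕ → ℕ := Nat.nth (· ∈ x)

/-!
If `x` meets every interval `[a m, a (m + 1))` from `m = N` on, its `m`-th element lies below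
`a (N + m + 1) ≤ a (2 m)`; so applying unboundedness to the set `{a (2 n)}` yields an `x` missing
infinitely many intervals.

Conversely, given `a`, choose partition points with `A (n + 1) > enum a (A n)`. If `x` misses
`[A n, A (n + 1))` and `k ≤ A n` is the number of elements of `x` below `A n`, then
`enum x k ≥ A (n + 1) > enum a (A n) ≥ enum a k`, and `k` grows with `n`.
-/

lemma enum_range {f : ℕ → ℕ} (hf : StrictMono f) : enum (range f) = f :=
  (Nat.nth_strictMono (infinite_range_of_injective hf.injective)).range_inj hf |>.mp
    (Nat.range_nth_of_infinite (infinite_range_of_injective hf.injective))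

lemma le_enum {x : Set ℕ} (hx : x.Infinite) (n : ℕ) : n ≤ enum x n :=
  Nat.le_nth fun hfin => absurd hfin hx

lemma count_add_one_le_of_mem_Ico {p : ℕ → Prop} [DecidablePred p] {y c d : ℕ} (hy : p y)
    (hyI : y ∈ Ico c d) : Nat.count p c + 1 ≤ Nat.count p d :=
  (Nat.count_monotone _ hyI.1).trans_lt (Nat.count_strict_mono hy hyI.2)

lemma enum_lt_of_forall_inter_Ico_nonempty {x : Set ℕ} {a : ℕ → ℕ}
    (h : ∀ m, (x ∩ Ico (a m) (a (m + 1))).Nonempty) (m : ℕ) : enum x m < a (m + 1) := by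
  classical
  have hcount : ∀ m, m ≤ Nat.count (· ∈ x) (a m) := by
    intro m
    induction m with
    | zero => exact Nat.zero_le _
    | succ m ih =>
      obtain ⟨y, hy, hyI⟩ := h m
      exact (Nat.add_le_add_right ih 1).trans (count_add_one_le_of_mem_Ico hy hyI)
  exact Nat.nth_lt_of_lt_count (hcount (m + 1))

lemma finite_lt_enum_of_finite_inter_Ico_eq_empty {x : Set ℕ} {a : ℕ → ℕ} (ha : StrictMono a)
    (hgaps : {n | x ∩ Ico (a n) (a (n + 1)) = ∅}.Finite) : {n | a (2 * n) < enum x n}.Finite := by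
  obtain ⟨N, hN⟩ := hgaps.bddAbove
  have hmeet : ∀ m, (x ∩ Ico (a (N + 1 + m)) (a (N + 1 + m + 1))).Nonempty := fun m =>
    nonempty_iff_ne_empty.mpr fun hgap => by have := hN hgap; omega
  refine (finite_Iio (N + 2)).subset fun n hn => ?_
  have hn' : a (2 * n) < enum x n := hn
  rw [mem_Iio]
  by_contra! hge
  have hlt : enum x n < a (N + 1 + n + 1) := enum_lt_of_forall_inter_Ico_nonempty hmeet n
  have hle : a (N + 1 + n + 1) ≤ a (2 * n) := ha.monotone (by omega)
  omega

lemma le_enum_count_of_inter_Ico_eq_empty {x : Set ℕ} [DecidablePred (· ∈ x)] (hx : x.Infinite)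
    {p q : ℕ} (hgap : x ∩ Ico p q = ∅) : q ≤ enum x (Nat.count (· ∈ x) p) := by
  by_contra! hlt
  exact hgap.subset
    ⟨Nat.nth_mem_of_infinite (p := (· ∈ x)) hx _, Nat.le_nth_count (p := (· ∈ x)) hx p, hlt⟩

lemma infinite_enum_lt_of_infinite_inter_Ico_eq_empty {a x : Set ℕ} (ha : a.Infinite)
    (hx : x.Infinite) {A : ℕ → ℕ} (hAmono : StrictMono A) (hA : ∀ n, enum a (A n) < A (n + 1))
    (hgaps : {n | x ∩ Ico (A n) (A (n + 1)) = ∅}.Infinite) :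
    {k | enum a k < enum x k}.Infinite := by
  classical
  refine infinite_of_forall_exists_gt fun M => ?_
  obtain ⟨n, hgap, hn⟩ := hgaps.exists_gt (enum x M)
  refine ⟨Nat.count (· ∈ x) (A n), ?_, ?_⟩
  · calc enum a (Nat.count (· ∈ x) (A n)) ≤ enum a (A n) :=
          Nat.nth_monotone ha (Nat.count_le _)
      _ < A (n + 1) := hA n
      _ ≤ enum x (Nat.count (· ∈ x) (A n)) := le_enum_count_of_inter_Ico_eq_empty hx hgap
  · exact (Nat.lt_nth_iff_count_lt (p := (· ∈ x)) hx).mpr (hn.trans_le (hAmono.id_le n))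

lemma exists_strictMono_enum_lt {a : Set ℕ} (ha : a.Infinite) :
    ∃ A : ℕ → ℕ, StrictMono A ∧ ∀ n, enum a (A n) < A (n + 1) := by
  refine ⟨fun n => (fun m => enum a m + 1)^[n] 0, ?_, fun n => ?_⟩
  · refine strictMono_nat_of_lt_succ fun n => ?_
    rw [Function.iterate_succ_apply']
    exact Nat.lt_succ_of_le (le_enum ha _)
  · simp only [Function.iterate_succ_apply']
    exact Nat.lt_succ_self _

theorem stmt0 (X : Set (Set ℕ)) (hX : ∀ x ∈ X, x.Infinite) :
    (∀ a : Set ℕ, a.Infinite → ∃ x ∈ X, {n | enum a n < enum x n}.Infinite) ↔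
    (∀ a : ℕ → ℕ, StrictMono a → ∃ x ∈ X,
      {n | x ∩ Set.Ico (a n) (a (n + 1)) = ∅}.Infinite) := by
  constructor
  · intro h a ha
    have ha2 : StrictMono fun n => a (2 * n) := ha.comp fun m n hmn => by omega
    obtain ⟨x, hxX, hx⟩ := h _ (infinite_range_of_injective ha2.injective)
    rw [enum_range ha2] at hx
    exact ⟨x, hxX, fun hfin => hx (finite_lt_enum_of_finite_inter_Ico_eq_empty ha hfin)⟩
  · intro h a ha
    obtain ⟨A, hAmono, hA⟩ := exists_strictMono_enum_lt ha
    obtain ⟨x, hxX, hgaps⟩ := h A hAmono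
    exact ⟨x, hxX, infinite_enum_lt_of_infinite_inter_Ico_eq_empty ha (hX x hxX) hAmono hA hgaps⟩
end

section
/- For each of the sets B_α defined in the proof of Lemma 2.3: fix an increasing function a : ℕ → ℕ and a κ-generalized tower X_α; then the family B_α of all infinite b ⊆ ℕ such that x ∩ ⋃_{n∈b}[a(n), a(n+1)) is finite for all but fewer than κ sets x ∈ X_α, is groupwise dense in [ℕ]^∞. -/
open Set

/-- `X ⊆ [ℕ]^∞` is a `κ`-generalized tower. -/
def IsGenTower (κ : Cardinal) (X : Set (Set ℕ)) : Prop :=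
  (∀ x ∈ X, x.Infinite) ∧ κ ≤ Cardinal.mk X ∧
  ∀ a : ℕ → ℕ, StrictMono a → ∃ b : Set ℕ, b.Infinite ∧
    ∃ S : Set (Set ℕ), S ⊆ X ∧ Cardinal.mk S < κ ∧
      ∀ x ∈ X \ S, (x ∩ ⋃ n ∈ b, Set.Ico (a n) (a (n + 1))).Finite

/-- A family `B ⊆ [ℕ]^∞` is groupwise dense. -/
def GroupwiseDense (B : Set (Set ℕ)) : Prop :=
  (∀ b ∈ B, ∀ y : Set ℕ, y.Infinite → (y \ b).Finite → y ∈ B) ∧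
  (∀ b : ℕ → ℕ, StrictMono b →
    ∃ c : Set ℕ, c.Infinite ∧ (⋃ n ∈ c, Set.Ico (b n) (b (n + 1))) ∈ B)

theorem stmt2 (κ : Cardinal) (hκ : Cardinal.aleph0 < κ)
    (a : ℕ → ℕ) (ha : StrictMono a)
    (X : Set (Set ℕ)) (hX : IsGenTower κ X) :
    GroupwiseDense {b : Set ℕ | b.Infinite ∧
      ∃ S : Set (Set ℕ), S ⊆ X ∧ Cardinal.mk S < κ ∧
        ∀ x ∈ X \ S, (x ∩ ⋃ n ∈ b, Set.Ico (a n) (a (n + 1))).Finite} := by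
  obtain ⟨hXinf, hXcard, htower⟩ := hX
  constructor
  · rintro b ⟨hbinf, S, hSX, hScard, hfin⟩ y hyinf hyb
    refine ⟨hyinf, S, hSX, hScard, fun x hx => ?_⟩
    have h1 := hfin x hx
    have hsub : (x ∩ ⋃ n ∈ y, Set.Ico (a n) (a (n+1))) ⊆
        (x ∩ ⋃ n ∈ b, Set.Ico (a n) (a (n+1))) ∪ ⋃ n ∈ y \ b, Set.Ico (a n) (a (n+1)) := by
      rintro m ⟨hmx, hmU⟩
      simp only [mem_iUnion, exists_prop] at hmU
      obtain ⟨n, hny, hn⟩ := hmU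
      by_cases hnb : n ∈ b
      · exact Or.inl ⟨hmx, mem_biUnion hnb hn⟩
      · exact Or.inr (mem_biUnion ⟨hny, hnb⟩ hn)
    exact ((h1.union (hyb.biUnion fun n _ => Set.finite_Ico _ _)).subset hsub)
  · intro b hb
    obtain ⟨b', hb'inf, S, hSX, hScard, hfin⟩ := htower (a ∘ b) (ha.comp hb)
    refine ⟨b', hb'inf, ?_, S, hSX, hScard, fun x hx => ?_⟩
    · have himg : b '' b' ⊆ ⋃ n ∈ b', Set.Ico (b n) (b (n+1)) := by
        rintro m ⟨n, hn, rfl⟩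
        exact mem_biUnion hn ⟨le_refl _, hb (Nat.lt_succ_self n)⟩
      exact (hb'inf.image hb.injective.injOn).mono himg
    · refine (hfin x hx).subset ?_
      rintro m ⟨hmx, hmU⟩
      simp only [mem_iUnion, exists_prop] at hmU
      obtain ⟨n, hnU, hn⟩ := hmU
      obtain ⟨k, hk, hnk⟩ := hnU
      refine ⟨hmx, mem_biUnion hk ?_⟩
      constructor
      · exact le_trans (ha.monotone hnk.1) hn.1
      · exact lt_of_lt_of_le hn.2 (ha.monotone hnk.2)
end

section
/- Let z be an infinite subset of ℕ with increasing enumeration e_z satisfying e_z(1) ≠ 1, and define z̃ by z̃(1) = e_z(1) and z̃(n+1) = e_z(z̃(n)). If t ⊆ ℕ omits infinitely many intervals [z̃(n), z̃(n+1)) and is the union of the remaining intervals ⋃_{n∈bᶜ}[z̃(n), z̃(n+1)) for some coinfinite infinite b, then e_z(n) ≤ e_t(n) for infinitely many n (where e_t is the increasing enumeration of t). -/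
open Set

theorem stmt6 (z : Set ℕ) (hz : z.Infinite) (h1 : enum z 0 ≠ 0)
    (zt : ℕ → ℕ) (hzt0 : zt 0 = enum z 0)
    (hzts : ∀ n, zt (n + 1) = enum z (zt n))
    (b : Set ℕ) (hb : b.Infinite) (hbc : bᶜ.Infinite)
    (t : Set ℕ) (ht : t = ⋃ n ∈ bᶜ, Set.Ico (zt n) (zt (n + 1))) :
    {n | enum z n ≤ enum t n}.Infinite := by
  classical
  have hzm : StrictMono (enum z) := Nat.nth_strictMono hz
  have hgt : ∀ k, k < enum z k := by
    intro k
    induction k with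
    | zero => exact Nat.pos_of_ne_zero h1
    | succ n ih => exact lt_of_le_of_lt ih (hzm (Nat.lt_succ_self n))
  have hztm : StrictMono zt := by
    apply strictMono_nat_of_lt_succ
    intro n
    rw [hzts]
    exact hgt (zt n)
  have htinf : t.Infinite := by
    have hsub : zt '' bᶜ ⊆ t := by
      rintro x ⟨n, hn, rfl⟩
      rw [ht]
      exact Set.mem_biUnion hn ⟨le_rfl, hztm (Nat.lt_succ_self n)⟩
    exact (hbc.image (hztm.injective.injOn)).mono hsub
  have htinf' : {x | x ∈ t}.Infinite := htinf
  have key : ∀ n ∈ b, enum z (zt n) ≤ enum t (zt n) := by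
    intro n hn
    have hcount : Nat.count (· ∈ t) (zt (n + 1)) ≤ zt n := by
      rw [Nat.count_eq_card_filter_range]
      have hsub : (Finset.range (zt (n + 1))).filter (· ∈ t) ⊆
          Finset.Ico (zt 0) (zt n) := by
        intro x hx
        rw [Finset.mem_filter, Finset.mem_range] at hx
        obtain ⟨hxlt, hxt⟩ := hx
        rw [ht] at hxt
        simp only [Set.mem_iUnion, Set.mem_Ico] at hxt
        obtain ⟨m, hm, hxm1, hxm2⟩ := hxt
        have hmn : m ≠ n := fun h => hm (h ▸ hn)
        have hmlt : m < n := by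
          rcases lt_or_gt_of_ne hmn with h | h
          · exact h
          · exact absurd (lt_of_le_of_lt ((hztm.monotone h).trans hxm1) hxlt)
              (lt_irrefl _)
        rw [Finset.mem_Ico]
        exact ⟨(hztm.monotone (Nat.zero_le m)).trans hxm1,
          lt_of_lt_of_le hxm2 (hztm.monotone hmlt)⟩
      calc ((Finset.range (zt (n + 1))).filter (· ∈ t)).card
          ≤ (Finset.Ico (zt 0) (zt n)).card := Finset.card_le_card hsub
        _ = zt n - zt 0 := Nat.card_Ico _ _
        _ ≤ zt n := Nat.sub_le _ _
    have hle : zt (n + 1) ≤ Nat.nth (· ∈ t) (zt n) :=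
      (Nat.count_le_iff_le_nth htinf').1 hcount
    rw [hzts n] at hle
    exact hle
  have hsub : zt '' b ⊆ {n | enum z n ≤ enum t n} := by
    rintro x ⟨n, hn, rfl⟩
    exact key n hn
  exact (hb.image (hztm.injective.injOn)).mono hsub
end

section
/- If x and t are infinite subsets of ℕ with x ⊆* t (x \ t finite) and t \ x infinite, then e_t ≤* e_x, where e_t and e_x are the increasing enumerations of t and x, i.e., e_t(n) ≤ e_x(n) for all but finitely many n. -/
open Set Filter

theorem stmt7 (x t : Set ℕ) (hx : x.Infinite) (ht : t.Infinite)
    (h1 : (x \ t).Finite) (h2 : (t \ x).Infinite) :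
    ∀ᶠ n in atTop, enum t n ≤ enum x n := by
  classical
  set c := h1.toFinset.card with hc
  -- key count inequality for large m
  have key : ∀ m, c ≤ Nat.count (· ∈ t \ x) m →
      Nat.count (· ∈ x) m ≤ Nat.count (· ∈ t) m := by
    intro m hm
    have e1 : Nat.count (· ∈ x) m ≤ Nat.count (· ∈ x ∩ t) m + c := by
      rw [Nat.count_eq_card_filter_range, Nat.count_eq_card_filter_range]
      calc ((Finset.range m).filter (· ∈ x)).card
          ≤ ((Finset.range m).filter (· ∈ x ∩ t) ∪ h1.toFinset).card := by
            apply Finset.card_le_card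
            intro k hk
            simp only [Finset.mem_filter, Finset.mem_range] at hk
            by_cases hkt : k ∈ t
            · exact Finset.mem_union_left _ (by simp [hk.1, hk.2, hkt])
            · exact Finset.mem_union_right _ (by simp [hk.2, hkt])
        _ ≤ _ := (Finset.card_union_le _ _)
    have e2 : Nat.count (· ∈ x ∩ t) m + Nat.count (· ∈ t \ x) m
        ≤ Nat.count (· ∈ t) m := by
      simp only [Nat.count_eq_card_filter_range]
      rw [← Finset.card_union_of_disjoint]
      · apply Finset.card_le_card
        intro k hk
        rcases Finset.mem_union.1 hk with h | h <;>
          simp only [Finset.mem_filter, Finset.mem_range, Set.mem_inter_iff,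
            Set.mem_diff] at h ⊢ <;> tauto
      · rw [Finset.disjoint_left]
        intro a ha hb
        simp only [Finset.mem_filter, Set.mem_inter_iff, Set.mem_diff] at ha hb
        exact hb.2.2 ha.2.1
    omega
  set M := Nat.nth (· ∈ t \ x) c + 1 with hM
  have hMc : c ≤ Nat.count (· ∈ t \ x) M := by
    rw [hM, Nat.count_nth_succ_of_infinite (p := (· ∈ t \ x)) h2]; omega
  filter_upwards [eventually_ge_atTop M] with n hn
  have hnM : M ≤ Nat.nth (· ∈ x) n + 1 := by
    have := (Nat.nth_strictMono (p := (· ∈ x)) hx).le_apply (x := n)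
    omega
  have hcount : n + 1 ≤ Nat.count (· ∈ t) (Nat.nth (· ∈ x) n + 1) := by
    have h := key _ (hMc.trans (Nat.count_monotone _ hnM))
    rwa [Nat.count_nth_succ_of_infinite (p := (· ∈ x)) hx] at h
  have := Nat.nth_lt_of_lt_count (p := (· ∈ t)) (n := Nat.nth (· ∈ x) n + 1) (k := n)
    (by omega)
  simpa [enum] using Nat.lt_succ_iff.mp this
end

section
/- Let X be a topological space such that for every sequence (𝒰_n) of open γ-covers of X there are selections U_n ∈ 𝒰_n and a subspace X' ⊆ X satisfying S₁(Γ,Γ) with {U_n : n ∈ ℕ} a γ-cover of X \ X'. Then X satisfies S₁(Γ,Γ). -/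
open Set

/-- `𝒰` is a γ-cover of `Y` (by open subsets of the ambient space, proper on `Y`):
an infinite family of open sets, none containing all of `Y`, such that each
point of `Y` belongs to all but finitely many members. -/
def IsGammaCover {X : Type*} [TopologicalSpace X] (Y : Set X) (𝒰 : Set (Set X)) : Prop :=
  𝒰.Infinite ∧ (∀ U ∈ 𝒰, IsOpen U ∧ ¬ Y ⊆ U) ∧ ∀ y ∈ Y, {U ∈ 𝒰 | y ∉ U}.Finite

/-- `Y` satisfies `S₁(Γ,Γ)`. -/
def S1GG {X : Type*} [TopologicalSpace X] (Y : Set X) : Prop :=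
  ∀ 𝒰 : ℕ → Set (Set X), (∀ n, IsGammaCover Y (𝒰 n)) →
    ∃ U : ℕ → Set X, (∀ n, U n ∈ 𝒰 n) ∧ IsGammaCover Y {V | ∃ n, V = U n}

/-!
Enumerate the `i`-th cover injectively as `u i 0, u i 1, …` and feed the hypothesis the diagonal
γ-covers `{⋂_{i ≤ n} u i (n + k) | k ∈ ℕ}`. The selected sets `W n = ⋂_{i ≤ n} u i (κ n)` form a
γ-cover of `X \ X'`; on an infinite set `S` of indices on which `W` is injective, every `x ∉ X'`
lies in `W n` for almost all `n ∈ S`, hence in `u i (κ n)` for almost all `i`, whenever `i ≤ n ∈ S`.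
It remains to pick in each row `i` one of the sets `u i (κ n)` with `i ≤ n ∈ S` so that the picks
form a γ-cover of `X'`. A row infinitely many of whose sets are proper on `X'` is a γ-cover of `X'`,
and `S₁(Γ,Γ)` for `X'` selects from those rows; every other row has a set containing `X'`.
-/

theorem Set.Infinite.image_of_finite_setOf_notMem {ι X : Type*} {f : ι → Set X} {T : Set ι}
    {Y : Set X} (hT : T.Infinite) (hY : ∀ i ∈ T, ¬ Y ⊆ f i)
    (hfin : ∀ y ∈ Y, {i ∈ T | y ∉ f i}.Finite) : (f '' T).Infinite := by
  intro himage
  refine hT ((himage.biUnion (t := fun V => {i ∈ T | f i = V}) fun V hV => ?_).subset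
    fun i hi => mem_biUnion (mem_image_of_mem f hi) ⟨hi, rfl⟩)
  obtain ⟨i₀, hi₀, rfl⟩ := hV
  by_contra hfiber
  refine hY i₀ hi₀ fun y hy => ?_
  obtain ⟨i, ⟨hiT, hfi⟩, hyi⟩ := (Set.Infinite.sdiff hfiber (hfin y hy)).nonempty
  by_contra hy₀
  exact hyi ⟨hiT, hfi ▸ hy₀⟩

theorem Set.Infinite.image_of_le_apply {S : Set ℕ} (hS : S.Infinite) {f : ℕ → ℕ}
    (hf : ∀ n, n ≤ f n) : (f '' S).Infinite :=
  infinite_of_forall_exists_gt fun a =>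
    let ⟨n, hn, han⟩ := hS.exists_gt a
    ⟨f n, mem_image_of_mem f hn, han.trans_le (hf n)⟩

theorem exists_infinite_injOn {α : Type*} {W : ℕ → α} (h : {V | ∃ n, V = W n}.Infinite) :
    ∃ S : Set ℕ, S.Infinite ∧ InjOn W S := by
  obtain ⟨S, -, hS⟩ := exists_subset_bijOn univ W
  refine ⟨S, fun hfin => h ?_, hS.injOn⟩
  simpa [hS.image_eq, image_univ, range, eq_comm] using hfin.image W

theorem finite_setOf_notMem_of_injOn {X : Type*} {W U : ℕ → Set X} {S : Set ℕ} {σ : ℕ → ℕ}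
    {x : X} (hW : {V | (∃ n, V = W n) ∧ x ∉ V}.Finite) (hS : InjOn W S) (hσS : ∀ i, σ i ∈ S)
    (hσ : ∀ i, i ≤ σ i) (hWU : ∀ i, W (σ i) ⊆ U i) : {i | x ∉ U i}.Finite := by
  have hbad : {n ∈ S | x ∉ W n}.Finite := .of_finite_image
    (hW.subset (by rintro _ ⟨n, hn, rfl⟩; exact ⟨⟨n, rfl⟩, hn.2⟩)) (hS.mono fun _ h => h.1)
  obtain ⟨B, hB⟩ := hbad.bddAbove
  exact (finite_Iic B).subset fun i hi => (hσ i).trans (hB ⟨hσS i, fun h => hi (hWU i h)⟩)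

section

variable {X : Type*} [TopologicalSpace X]

theorem IsGammaCover.exists_injective_seq {Y : Set X} {𝒰 : Set (Set X)} (h : IsGammaCover Y 𝒰) :
    ∃ u : ℕ → Set X, Function.Injective u ∧ (∀ k, u k ∈ 𝒰) ∧ ∀ y ∈ Y, {k | y ∉ u k}.Finite := by
  refine ⟨fun k => h.1.natEmbedding _ k,
    Subtype.coe_injective.comp (h.1.natEmbedding _).injective,
    fun k => (h.1.natEmbedding _ k).2, fun y hy => ?_⟩
  refine ((h.2.2 y hy).preimage (Subtype.coe_injective.comp
    (h.1.natEmbedding _).injective).injOn).subset fun k hk => ?_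
  exact ⟨(h.1.natEmbedding _ k).2, hk⟩

theorem isGammaCover_sep_of_infinite {Y : Set X} {𝒟 : Set (Set X)}
    (hopen : ∀ U ∈ 𝒟, IsOpen U) (hfin : ∀ y ∈ Y, {U ∈ 𝒟 | y ∉ U}.Finite)
    (hinf : {U ∈ 𝒟 | ¬ Y ⊆ U}.Infinite) : IsGammaCover Y {U ∈ 𝒟 | ¬ Y ⊆ U} :=
  ⟨hinf, fun U hU => ⟨hopen U hU.1, hU.2⟩,
    fun y hy => (hfin y hy).subset fun _ hU => ⟨hU.1.1, hU.2⟩⟩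

/-- Rows with only finitely many members proper on `Y` contribute a member containing `Y`; the
last conjunct stands in for the infiniteness of the selected family. -/
theorem S1GG.exists_selection {Y : Set X} (hY : S1GG Y) (𝒟 : ℕ → Set (Set X))
    (hopen : ∀ n, ∀ U ∈ 𝒟 n, IsOpen U) (hinf : ∀ n, (𝒟 n).Infinite)
    (hfin : ∀ n, ∀ y ∈ Y, {U ∈ 𝒟 n | y ∉ U}.Finite) :
    ∃ U : ℕ → Set X, (∀ n, U n ∈ 𝒟 n) ∧ (∀ y ∈ Y, {V | (∃ n, V = U n) ∧ y ∉ V}.Finite) ∧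
      ({V | ∃ n, V = U n}.Infinite ∨ {n | Y ⊆ U n}.Infinite) := by
  classical
  set P : ℕ → Set (Set X) := fun n => {U ∈ 𝒟 n | ¬ Y ⊆ U}
  have hZ : ∀ n, ∃ Z ∈ 𝒟 n, ¬ (P n).Infinite → Y ⊆ Z := fun n => by
    by_cases hn : (P n).Infinite
    · obtain ⟨Z, hZ⟩ := (hinf n).nonempty
      exact ⟨Z, hZ, absurd hn⟩
    · obtain ⟨Z, hZ, hYZ⟩ := ((hinf n).sdiff (not_infinite.1 hn)).nonempty
      exact ⟨Z, hZ, fun _ => not_not.1 fun h => hYZ ⟨hZ, h⟩⟩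
  choose Z hZ𝒟 hYZ using hZ
  by_cases hproper : ∃ n₀, (P n₀).Infinite
  swap
  · rw [not_exists] at hproper
    refine ⟨Z, hZ𝒟, fun y hy => ?_, Or.inr ?_⟩
    · convert finite_empty
      exact eq_empty_of_forall_notMem fun V ⟨⟨n, hn⟩, hyV⟩ => hyV (hn ▸ hYZ n (hproper n) hy)
    · simpa [fun n => hYZ n (hproper n)] using infinite_univ
  obtain ⟨n₀, hn₀⟩ := hproper
  have hPγ : ∀ n, (P n).Infinite → IsGammaCover Y (P n) := fun n =>
    isGammaCover_sep_of_infinite (hopen n) (hfin n)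
  obtain ⟨V, hV, hVγ⟩ := hY (fun n => if (P n).Infinite then P n else P n₀)
    fun n => by split_ifs with hn <;> exact hPγ _ ‹_›
  refine ⟨fun n => if (P n).Infinite then V n else Z n, fun n => ?_, fun y hy => ?_, ?_⟩
  · by_cases hn : (P n).Infinite
    · have hVn : V n ∈ P n := by simpa [hn] using hV n
      simpa [hn] using hVn.1
    · simpa [hn] using hZ𝒟 n
  · refine (hVγ.2.2 y hy).subset ?_
    rintro _ ⟨⟨n, rfl⟩, hyn⟩
    by_cases hn : (P n).Infinite
    · simp only [hn, if_true] at hyn ⊢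
      exact ⟨⟨n, rfl⟩, hyn⟩
    · simp only [hn, if_false] at hyn
      exact absurd (hYZ n hn hy) hyn
  · by_cases hB : {n | ¬ (P n).Infinite}.Infinite
    · refine Or.inr (hB.mono fun n (hn : ¬ (P n).Infinite) => ?_)
      simpa [hn] using hYZ n hn
    · refine Or.inl ((hVγ.1.sdiff ((not_infinite.1 hB).image V)).mono ?_)
      rintro _ ⟨⟨n, rfl⟩, hn⟩
      have hPn : (P n).Infinite := not_not.1 fun h => hn ⟨n, h, rfl⟩
      exact ⟨n, by simp [hPn]⟩

theorem isGammaCover_univ_of_finite_setOf_notMem {U : ℕ → Set X} {Y : Set X}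
    (hU : ∀ n, IsOpen (U n) ∧ ¬ univ ⊆ U n) (hout : ∀ x ∉ Y, {n | x ∉ U n}.Finite)
    (hin : ∀ y ∈ Y, {V | (∃ n, V = U n) ∧ y ∉ V}.Finite)
    (hinf : {V | ∃ n, V = U n}.Infinite ∨ {n | Y ⊆ U n}.Infinite) :
    IsGammaCover univ {V | ∃ n, V = U n} := by
  refine ⟨hinf.elim id fun hT => ?_, by rintro _ ⟨n, rfl⟩; exact hU n, fun x _ => ?_⟩
  · refine (hT.image_of_finite_setOf_notMem (fun n _ => (hU n).2) fun x _ => ?_).mono ?_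
    · by_cases hx : x ∈ Y
      · exact finite_empty.subset fun n hn => hn.2 (hn.1 hx)
      · exact (hout x hx).subset fun n hn => hn.2
    · rintro _ ⟨n, -, rfl⟩
      exact ⟨n, rfl⟩
  · by_cases hx : x ∈ Y
    · exact hin x hx
    · refine ((hout x hx).image U).subset ?_
      rintro _ ⟨⟨n, rfl⟩, hxn⟩
      exact ⟨n, hxn, rfl⟩

theorem isGammaCover_univ_biInter_Iic {u : ℕ → ℕ → Set X}
    (hu : ∀ i k, IsOpen (u i k) ∧ ¬ univ ⊆ u i k) (hfin : ∀ i x, {k | x ∉ u i k}.Finite)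
    (n : ℕ) : IsGammaCover univ {V | ∃ k, V = ⋂ i ∈ Iic n, u i (n + k)} := by
  refine isGammaCover_univ_of_finite_setOf_notMem (Y := ∅)
    (fun k => ⟨(finite_Iic n).isOpen_biInter fun i _ => (hu i _).1,
      fun h => (hu n (n + k)).2 (h.trans (biInter_subset_of_mem self_mem_Iic))⟩)
    (fun x _ => ?_) (by simp) (Or.inr (by simpa using infinite_univ))
  refine (((finite_Iic n).biUnion fun i _ => hfin i x).preimage
    (add_right_injective n).injOn).subset fun k hk => ?_
  simpa using hk

end

theorem stmt9 {X : Type*} [TopologicalSpace X]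
    (h : ∀ 𝒰 : ℕ → Set (Set X), (∀ n, IsGammaCover (univ : Set X) (𝒰 n)) →
      ∃ U : ℕ → Set X, (∀ n, U n ∈ 𝒰 n) ∧
        ∃ X' : Set X, S1GG X' ∧ IsGammaCover (univ \ X') {V | ∃ n, V = U n}) :
    S1GG (univ : Set X) := by
  intro 𝒰 h𝒰
  choose u hu_inj hu_mem hu_fin using fun i => (h𝒰 i).exists_injective_seq
  have hu : ∀ i k, IsOpen (u i k) ∧ ¬ univ ⊆ u i k := fun i k => (h𝒰 i).2.1 _ (hu_mem i k)
  obtain ⟨W, hW, X', hX', hWγ⟩ := h _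
    (isGammaCover_univ_biInter_Iic hu fun i x => hu_fin i x (mem_univ x))
  choose k hk using hW
  obtain ⟨S, hS_inf, hS⟩ := exists_infinite_injOn hWγ.1
  set T : ℕ → Set ℕ := fun i => {n ∈ S | i ≤ n}
  have hT_inf : ∀ i, (T i).Infinite := fun i =>
    (hS_inf.sdiff (finite_Iio i)).mono fun n hn => ⟨hn.1, not_lt.1 hn.2⟩
  obtain ⟨U, hU, hU_in, hU_inf⟩ := hX'.exists_selection
    (fun i => (fun n => u i (n + k n)) '' T i)
    (by rintro i _ ⟨n, -, rfl⟩; exact (hu i _).1)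
    (fun i => by simpa [image_image] using ((hT_inf i).image_of_le_apply
      fun n => Nat.le_add_right n (k n)).image (hu_inj i).injOn)
    (fun i y _ => ((hu_fin i y (mem_univ y)).image (u i)).subset
      (by rintro _ ⟨⟨n, -, rfl⟩, hyn⟩; exact ⟨_, hyn, rfl⟩))
  choose σ hσ hUσ using hU
  refine ⟨U, fun i => hUσ i ▸ hu_mem _ _,
    isGammaCover_univ_of_finite_setOf_notMem (fun i => hUσ i ▸ hu _ _) (fun x hx => ?_)
      hU_in hU_inf⟩
  exact finite_setOf_notMem_of_injOn (hWγ.2.2 x ⟨trivial, hx⟩) hS (fun i => (hσ i).1)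
    (fun i => (hσ i).2) fun i => hk (σ i) ▸ hUσ i ▸ biInter_subset_of_mem (hσ i).2
end

section
/- (Galvin–Miller) Let 𝒰 be a family of open subsets of P(ℕ) (the Cantor space of all subsets of ℕ) that is an ω-cover of Fin, the set of finite subsets of ℕ. Then there exist an increasing function a : ℕ → ℕ and sets U_1, U_2, … ∈ 𝒰 such that for every infinite x ⊆ ℕ and every n: if x ∩ [a(n), a(n+1)) = ∅, then x ∈ U_n. -/
open Set

/-- `U` is open in the Cantor space `P(ℕ)`: membership is determined by a
finite set of coordinates. -/
def CantorOpen (U : Set (Set ℕ)) : Prop :=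
  ∀ s ∈ U, ∃ F : Finset ℕ,
    ∀ s' : Set ℕ, (∀ n ∈ F, (n ∈ s' ↔ n ∈ s)) → s' ∈ U

lemma stmt10_key (𝒰 : Set (Set (Set ℕ)))
    (hopen : ∀ U ∈ 𝒰, CantorOpen U ∧ U ≠ Set.univ)
    (hω : ∀ F : Set (Set ℕ), F.Finite → (∀ s ∈ F, s.Finite) → ∃ U ∈ 𝒰, F ⊆ U)
    (b : ℕ) :
    ∃ c, b < c ∧ ∃ U ∈ 𝒰, ∀ x : Set ℕ, x ∩ Set.Ico b c = ∅ → x ∈ U := by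
  classical
  set Fam : Set (Set ℕ) := {s : Set ℕ | s ⊆ Set.Iio b} with hFam
  have hfin : Fam.Finite := (Set.finite_Iio b).finite_subsets
  obtain ⟨U, hU𝒰, hUsub⟩ := hω Fam hfin (fun s hs => (Set.finite_Iio b).subset hs)
  have hCO := (hopen U hU𝒰).1
  set F : Set ℕ → Finset ℕ := fun s => if h : s ∈ U then (hCO s h).choose else ∅ with hF
  have hFspec : ∀ s, (hs : s ∈ U) → ∀ s' : Set ℕ,
      (∀ n ∈ F s, (n ∈ s' ↔ n ∈ s)) → s' ∈ U := by
    intro s hs s' h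
    have := (hCO s hs).choose_spec s'
    apply this
    simpa [hF, dif_pos hs] using h
  set c : ℕ := max (b + 1) (hfin.toFinset.sup (fun s => (F s).sup id + 1)) with hc
  refine ⟨c, lt_of_lt_of_le (Nat.lt_succ_self b) (le_max_left _ _), U, hU𝒰, ?_⟩
  intro x hx
  have hsF : (x ∩ Set.Iio b) ∈ Fam := fun n hn => hn.2
  have hsU : (x ∩ Set.Iio b) ∈ U := hUsub hsF
  apply hFspec _ hsU
  intro n hn
  have hnc : n < c := by
    have h1 : n ≤ (F (x ∩ Set.Iio b)).sup id := Finset.le_sup (f := id) hn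
    have h2 : (F (x ∩ Set.Iio b)).sup id + 1 ≤
        hfin.toFinset.sup (fun s => (F s).sup id + 1) :=
      Finset.le_sup (f := fun s => (F s).sup id + 1) (hfin.mem_toFinset.mpr hsF)
    have h3 : hfin.toFinset.sup (fun s => (F s).sup id + 1) ≤ c := le_max_right _ _
    omega
  by_cases hnb : n < b
  · exact ⟨fun h => ⟨h, hnb⟩, fun h => h.1⟩
  · constructor
    · intro hnx
      have : n ∈ x ∩ Set.Ico b c := ⟨hnx, Nat.le_of_not_lt hnb, hnc⟩
      simp [hx] at this
    · intro hns
      exact absurd hns.2 hnb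

/-- Galvin–Miller lemma. -/
theorem stmt10 (𝒰 : Set (Set (Set ℕ)))
    (hopen : ∀ U ∈ 𝒰, CantorOpen U ∧ U ≠ Set.univ)
    (hω : ∀ F : Set (Set ℕ), F.Finite → (∀ s ∈ F, s.Finite) → ∃ U ∈ 𝒰, F ⊆ U) :
    ∃ a : ℕ → ℕ, StrictMono a ∧ ∃ U : ℕ → Set (Set ℕ), (∀ n, U n ∈ 𝒰) ∧
      ∀ x : Set ℕ, x.Infinite → ∀ n,
        x ∩ Set.Ico (a n) (a (n + 1)) = ∅ → x ∈ U n := by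
  classical
  have key := stmt10_key 𝒰 hopen hω
  let a : ℕ → ℕ := fun n => Nat.rec 0 (fun _ b => (key b).choose) n
  have ha : ∀ n, a n < a (n + 1) ∧ ∃ U ∈ 𝒰,
      ∀ x : Set ℕ, x ∩ Set.Ico (a n) (a (n + 1)) = ∅ → x ∈ U := by
    intro n
    exact ⟨(key (a n)).choose_spec.1, (key (a n)).choose_spec.2⟩
  choose _ U hU𝒰 hU using ha
  exact ⟨a, strictMono_nat_of_lt_succ (fun n => ((key (a n)).choose_spec.1)), U, hU𝒰,
    fun x _ n h => hU n x h⟩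
end

section
/- Let X, Y ⊆ P(ℕ), m a natural number, and 𝒰 a family of open subsets of P(ℕ)^{m+1} that is an ω-cover of Fin^m × Y. Then there is a family 𝒱 of open subsets of the disjoint union P(ℕ) ⊔ P(ℕ) that is an ω-cover of Fin ⊔ Y, such that the family { V^{m+1} ∩ (P(ℕ)^m × Y) : V ∈ 𝒱 } refines 𝒰 (identifying V ⊆ P(ℕ) ⊔ P(ℕ) with the corresponding pair of open sets and V^{m+1} with the product as in the standard embedding of X^m × Y into (X ⊔ Y)^{m+1}). -/
/-!
Collect the finitely many left coordinates `S` (finite sets) and right coordinates `T ⊆ Y` of a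
finite `F ⊆ Fin ⊔ Y`. The finite set `S^m × T` lies in a single `U ∈ 𝒰`, and since it is finite,
one finite set `W` of coordinates witnesses the openness of `U` at all its points. Then
`V = N_W(S) ⊔ N_W(T)`, where `N_W(S)` is the set of subsets of `ℕ` agreeing on `W` with some member
of `S`, is open, contains `F`, and every point of `V^m × (V ∩ Y)` agrees on `W` with a point of
`S^m × T`, hence lies in `U`. Enlarging `W` so that `2^|W| > |S|` leaves a pattern on `W` that no
member of `S` realises, so `V` is proper.
-/

open Set

/-- `U` is open in the product `P(ℕ)^m × P(ℕ)`. -/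
def CantorOpenProd (m : ℕ) (U : Set ((Fin m → Set ℕ) × Set ℕ)) : Prop :=
  ∀ p ∈ U, ∃ F : Finset ℕ,
    ∀ q : (Fin m → Set ℕ) × Set ℕ,
      (∀ i, ∀ n ∈ F, (n ∈ q.1 i ↔ n ∈ p.1 i)) →
      (∀ n ∈ F, (n ∈ q.2 ↔ n ∈ p.2)) → q ∈ U

/-- `V` is open in the disjoint union `P(ℕ) ⊔ P(ℕ)`. -/
def OpenSum (V : Set (Set ℕ ⊕ Set ℕ)) : Prop :=
  CantorOpen {s | Sum.inl s ∈ V} ∧ CantorOpen {s | Sum.inr s ∈ V}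

def cylinderNhd (W : Finset ℕ) (S : Set (Set ℕ)) : Set (Set ℕ) :=
  {s | ∃ t ∈ S, ∀ n ∈ W, (n ∈ s ↔ n ∈ t)}

theorem cantorOpen_cylinderNhd (W : Finset ℕ) (S : Set (Set ℕ)) :
    CantorOpen (cylinderNhd W S) := by
  rintro s ⟨t, ht, hst⟩
  exact ⟨W, fun s' hs' => ⟨t, ht, fun n hn => (hs' n hn).trans (hst n hn)⟩⟩

theorem subset_cylinderNhd (W : Finset ℕ) (S : Set (Set ℕ)) : S ⊆ cylinderNhd W S :=
  fun s hs => ⟨s, hs, fun _ _ => Iff.rfl⟩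

theorem cylinderNhd_ne_univ {S : Set (Set ℕ)} (hS : S.Finite) {W : Finset ℕ}
    (hW : hS.toFinset.card < 2 ^ W.card) : cylinderNhd W S ≠ univ := by
  classical
  intro hN
  have hpow : W.powerset ⊆ hS.toFinset.image fun t => W.filter (· ∈ t) := by
    intro E hE
    obtain ⟨t, ht, hEt⟩ : (E : Set ℕ) ∈ cylinderNhd W S := hN ▸ mem_univ _
    refine Finset.mem_image.2 ⟨t, hS.mem_toFinset.2 ht, ?_⟩
    ext n
    have hEW := Finset.mem_powerset.1 hE
    rw [Finset.mem_filter]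
    exact ⟨fun h => (hEt n h.1).2 h.2, fun h => ⟨hEW h, (hEt n (hEW h)).1 h⟩⟩
  have := (Finset.card_le_card hpow).trans Finset.card_image_le
  rw [Finset.card_powerset] at this
  omega

theorem exists_superset_cylinderNhd_ne_univ {S : Set (Set ℕ)} (hS : S.Finite) (W₀ : Finset ℕ) :
    ∃ W, W₀ ⊆ W ∧ cylinderNhd W S ≠ univ := by
  refine ⟨W₀ ∪ Finset.range hS.toFinset.card, Finset.subset_union_left,
    cylinderNhd_ne_univ hS ?_⟩
  calc hS.toFinset.card = (Finset.range hS.toFinset.card).card := (Finset.card_range _).symm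
    _ ≤ (W₀ ∪ Finset.range hS.toFinset.card).card := Finset.card_le_card Finset.subset_union_right
    _ < 2 ^ _ := Nat.lt_two_pow_self

theorem exists_cylinderNhd_prod_subset {m : ℕ} {U : Set ((Fin m → Set ℕ) × Set ℕ)}
    (hU : CantorOpenProd m U) {S T : Set (Set ℕ)} (hS : S.Finite) (hT : T.Finite)
    (hSTU : ∀ p : (Fin m → Set ℕ) × Set ℕ, (∀ i, p.1 i ∈ S) → p.2 ∈ T → p ∈ U) :
    ∃ W₀ : Finset ℕ, ∀ W, W₀ ⊆ W → ∀ p : (Fin m → Set ℕ) × Set ℕ,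
      (∀ i, p.1 i ∈ cylinderNhd W S) → p.2 ∈ cylinderNhd W T → p ∈ U := by
  classical
  have hG : (univ.pi (fun _ : Fin m => S) ×ˢ T).Finite := (Finite.pi fun _ => hS).prod hT
  have hGU : ∀ q ∈ univ.pi (fun _ : Fin m => S) ×ˢ T, q ∈ U :=
    fun q hq => hSTU q (fun i => hq.1 i (mem_univ i)) hq.2
  choose! witness hwitness using hU
  refine ⟨hG.toFinset.biUnion witness, fun W hW p hp₁ hp₂ => ?_⟩
  choose t ht hpt using hp₁
  obtain ⟨u, hu, hpu⟩ := hp₂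
  have htu : (t, u) ∈ univ.pi (fun _ : Fin m => S) ×ˢ T := ⟨fun i _ => ht i, hu⟩
  have hwW : witness (t, u) ⊆ W :=
    (Finset.subset_biUnion_of_mem witness (hG.mem_toFinset.2 htu)).trans hW
  exact hwitness (t, u) (hGU _ htu) p (fun i n hn => hpt i n (hwW hn)) fun n hn => hpu n (hwW hn)

theorem stmt13 (Y : Set (Set ℕ)) (m : ℕ)
    (𝒰 : Set (Set ((Fin m → Set ℕ) × Set ℕ)))
    (hopen : ∀ U ∈ 𝒰, CantorOpenProd m U ∧ U ≠ univ)
    (hω : ∀ F : Set ((Fin m → Set ℕ) × Set ℕ), F.Finite →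
      (∀ p ∈ F, (∀ i, (p.1 i).Finite) ∧ p.2 ∈ Y) → ∃ U ∈ 𝒰, F ⊆ U) :
    ∃ 𝒱 : Set (Set (Set ℕ ⊕ Set ℕ)),
      (∀ V ∈ 𝒱, OpenSum V ∧ V ≠ univ) ∧
      (∀ F : Set (Set ℕ ⊕ Set ℕ), F.Finite →
        (∀ z ∈ F, (∃ s : Set ℕ, z = Sum.inl s ∧ s.Finite) ∨
          (∃ s : Set ℕ, z = Sum.inr s ∧ s ∈ Y)) →
        ∃ V ∈ 𝒱, F ⊆ V) ∧
      ∀ V ∈ 𝒱, ∃ U ∈ 𝒰,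
        {p : (Fin m → Set ℕ) × Set ℕ |
          (∀ i, Sum.inl (p.1 i) ∈ V) ∧ Sum.inr p.2 ∈ V ∧ p.2 ∈ Y} ⊆ U := by
  refine ⟨{V | (OpenSum V ∧ V ≠ univ) ∧ ∃ U ∈ 𝒰, {p : (Fin m → Set ℕ) × Set ℕ |
      (∀ i, Sum.inl (p.1 i) ∈ V) ∧ Sum.inr p.2 ∈ V ∧ p.2 ∈ Y} ⊆ U},
    fun V hV => hV.1, ?_, fun V hV => hV.2⟩
  intro F hF hFgood
  set S : Set (Set ℕ) := {s | Sum.inl s ∈ F}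
  set T : Set (Set ℕ) := {y | Sum.inr y ∈ F}
  have hS : S.Finite := hF.preimage Sum.inl_injective.injOn
  have hT : T.Finite := hF.preimage Sum.inr_injective.injOn
  have hSfin : ∀ s ∈ S, s.Finite := fun s hs => by simpa using hFgood _ hs
  have hTY : T ⊆ Y := fun y hy => by simpa using hFgood _ hy
  obtain ⟨U, hU, hGU⟩ := hω (univ.pi (fun _ => S) ×ˢ T) ((Finite.pi fun _ => hS).prod hT)
    fun p hp => ⟨fun i => hSfin _ (hp.1 i (mem_univ i)), hTY hp.2⟩
  obtain ⟨W₀, hW₀⟩ := exists_cylinderNhd_prod_subset (hopen U hU).1 hS hT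
    fun p hp₁ hp₂ => hGU ⟨fun i _ => hp₁ i, hp₂⟩
  obtain ⟨W, hW₀W, hWS⟩ := exists_superset_cylinderNhd_ne_univ hS W₀
  refine ⟨{z | Sum.elim (· ∈ cylinderNhd W S) (· ∈ cylinderNhd W T) z},
    ⟨⟨⟨cantorOpen_cylinderNhd W S, cantorOpen_cylinderNhd W T⟩, fun hV => hWS ?_⟩, U, hU,
      fun p hp => hW₀ W hW₀W p hp.1 hp.2.1⟩, ?_⟩
  · exact eq_univ_of_forall fun s => (hV ▸ mem_univ (Sum.inl s) :)
  · rintro (s | y) hz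
    exacts [subset_cylinderNhd W S hz, subset_cylinderNhd W T hz]
end
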